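/- arXiv:2505.09370 — 5 statements merged into one kernel-verified Lean document; each statement's English description precedes it below -/
import Mathlib

section
/- Let f(x) = ½‖Ax - b‖², g(x) = η‖x‖₁, F = f + g, η > 0. Fix x and let E = {i : |(∇f(x))ᵢ| > η}, and suppose E ≠ ∅. Then every unit vector n that is a conical (nonnegative) combination of the vectors {-sign((∇f(x))ᵢ)·eᵢ : i ∈ E} is a descent direction from x: sup{⟨γ, n⟩ : γ a subgradient of F at x} < 0. -/
lemma my_sign_mul (x : ℝ) (h : x ≠ 0) : x * Real.sign x = |x| := by
  rcases lt_trichotomy x 0 with h2|h2|h2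
  · rw [Real.sign_of_neg h2, abs_of_neg h2]; ring
  · exact absurd h2 h
  · rw [Real.sign_of_pos h2, abs_of_pos h2]; ring

lemma my_abs_sign (x : ℝ) (h : x ≠ 0) : |Real.sign x| = 1 := by
  rcases lt_trichotomy x 0 with h2|h2|h2
  · rw [Real.sign_of_neg h2]; norm_num
  · exact absurd h2 h
  · rw [Real.sign_of_pos h2]; norm_num

/-- Let E = {i : |(∇f(x))ᵢ| > η} be nonempty. Every unit vector that is a
conical combination of {-sign((∇f(x))ᵢ)·eᵢ : i ∈ E} is a descent direction from x:
sup over subgradients γ of F at x of ⟨γ, d⟩ is negative. -/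
theorem stmt5 (k n : ℕ) (A : Matrix (Fin k) (Fin n) ℝ) (b : Fin k → ℝ)
    (η : ℝ) (hη : 0 < η) (x : Fin n → ℝ)
    (F : (Fin n → ℝ) → ℝ)
    (hF : ∀ y, F y = (1/2) * ∑ j, (A.mulVec y j - b j)^2 + η * ∑ l, |y l|)
    (gradf : Fin n → ℝ)
    (hgrad : gradf = A.transpose.mulVec (A.mulVec x - b))
    (hE : ∃ i : Fin n, |gradf i| > η)
    (α : Fin n → ℝ) (hαpos : ∀ i, 0 ≤ α i)
    (hαsupp : ∀ i : Fin n, ¬ (|gradf i| > η) → α i = 0)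
    (d : Fin n → ℝ)
    (hd : ∀ i, d i = α i * (-(Real.sign (gradf i))))
    (hunit : ∑ i, (d i)^2 = 1) :
    ∃ c : ℝ, c < 0 ∧
      ∀ γ : Fin n → ℝ,
        (∀ y : Fin n → ℝ, F y ≥ F x + ∑ l, γ l * (y l - x l)) →
        ∑ i, γ i * d i ≤ c := by
  set c : ℝ := ∑ i, α i * (η - |gradf i|) with hc
  -- pointwise identity: gradf i * d i + η * |d i| = α i * (η - |gradf i|)
  have hkey : ∀ i, gradf i * d i + η * |d i| = α i * (η - |gradf i|) := by
    intro i
    by_cases hα : α i = 0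
    · simp [hd i, hα]
    · have hgi : |gradf i| > η := by
        by_contra hcon; exact hα (hαsupp i hcon)
      have hne : gradf i ≠ 0 := by
        intro h0; rw [h0] at hgi; simp at hgi; linarith
      rw [hd i, abs_mul, abs_neg, my_abs_sign _ hne, abs_of_nonneg (hαpos i)]
      have := my_sign_mul (gradf i) hne
      linear_combination (-(α i)) * this
  -- c < 0
  have hcneg : c < 0 := by
    have hdne : ∃ i, d i ≠ 0 := by
      by_contra hcon
      push_neg at hcon
      simp [hcon] at hunit
    obtain ⟨i0, hi0⟩ := hdne
    have hαi0 : 0 < α i0 := by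
      rcases (hαpos i0).lt_or_eq with h|h
      · exact h
      · exact absurd (by simp [hd i0, ← h]) hi0
    have hgi0 : |gradf i0| > η := by
      by_contra hcon
      have := hαsupp i0 hcon
      linarith
    have : c < ∑ _i : Fin n, (0:ℝ) := by
      apply Finset.sum_lt_sum
      · intro j _
        by_cases hαj : α j = 0
        · simp [hαj]
        · have hgj : |gradf j| > η := by
            by_contra hcon; exact hαj (hαsupp j hcon)
          have := hαpos j
          nlinarith
      · exact ⟨i0, Finset.mem_univ i0, by nlinarith⟩
    simpa using this
  refine ⟨c, hcneg, ?_⟩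
  intro γ hγ
  set v : Fin k → ℝ := A.mulVec d with hv
  set M : ℝ := (1/2) * ∑ j, (v j)^2 with hM
  have hMnn : 0 ≤ M := by
    apply mul_nonneg (by norm_num)
    exact Finset.sum_nonneg fun j _ => sq_nonneg _
  -- adjoint identity
  have hadj : ∑ j, (A.mulVec x j - b j) * v j = ∑ i, gradf i * d i := by
    rw [hgrad]
    simp only [hv, Matrix.mulVec, dotProduct, Matrix.transpose_apply,
      Pi.sub_apply, Finset.sum_mul, Finset.mul_sum]
    rw [Finset.sum_comm]
    apply Finset.sum_congr rfl
    intro j _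
    apply Finset.sum_congr rfl
    intro i _
    ring
  -- for every t > 0 : ∑ γ i * d i ≤ c + t * M
  have hstep : ∀ t : ℝ, 0 < t → ∑ i, γ i * d i ≤ c + t * M := by
    intro t ht
    have hsub := hγ (fun l => x l + t * d l)
    have hmv : ∀ j, A.mulVec (fun l => x l + t * d l) j = A.mulVec x j + t * v j := by
      intro j
      simp only [Matrix.mulVec, dotProduct, hv, Finset.mul_sum,
        ← Finset.sum_add_distrib]
      apply Finset.sum_congr rfl
      intro i _
      ring
    rw [hF, hF] at hsub
    simp only [hmv, add_sub_cancel_left] at hsub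
    -- expand the quadratic part
    have hquad : (1/2) * ∑ j, (A.mulVec x j + t * v j - b j)^2
        = (1/2) * ∑ j, (A.mulVec x j - b j)^2
          + t * ∑ j, (A.mulVec x j - b j) * v j + t^2 * M := by
      rw [hM]
      simp only [Finset.mul_sum, ← Finset.sum_add_distrib]
      apply Finset.sum_congr rfl
      intro j _
      ring
    -- ℓ1 bound
    have hl1 : ∑ l, |x l + t * d l| ≤ ∑ l, |x l| + t * ∑ l, |d l| := by
      rw [Finset.mul_sum, ← Finset.sum_add_distrib]
      apply Finset.sum_le_sum
      intro l _
      calc |x l + t * d l| ≤ |x l| + |t * d l| := abs_add_le _ _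
        _ = |x l| + t * |d l| := by rw [abs_mul, abs_of_pos ht]
    have hγsum : ∑ l, γ l * (t * d l) = t * ∑ l, γ l * d l := by
      rw [Finset.mul_sum]
      apply Finset.sum_congr rfl
      intro l _
      ring
    rw [hquad, hγsum] at hsub
    -- combine
    have hcomb : ∑ i, gradf i * d i + η * ∑ l, |d l| = c := by
      rw [hc, Finset.mul_sum, ← Finset.sum_add_distrib]
      exact Finset.sum_congr rfl fun i _ => hkey i
    have ht2 : t * ∑ l, γ l * d l ≤ t * (c + t * M) := by
      have := hsub
      nlinarith [hsub, hadj, hcomb, hl1, mul_le_mul_of_nonneg_left hl1 (le_of_lt hη)]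
    exact le_of_mul_le_mul_left (by linarith [ht2]) ht
  -- take t → 0
  apply le_of_forall_pos_le_add
  intro ε hε
  have ht : (0:ℝ) < ε / (M + 1) := by positivity
  have := hstep _ ht
  have hM1 : ε / (M + 1) * M ≤ ε := by
    rw [div_mul_eq_mul_div, div_le_iff₀ (by linarith)]
    nlinarith
  linarith
end

section
/- Let f(x) = ½‖Ax - b‖², g(x) = η‖x‖₁, F = f + g, η > 0. Fix x, let E = {i : |(∇f(x))ᵢ| > η}, and suppose x minimizes F restricted to the coordinates where it is nonzero and |(∇f(x))ᵢ| ≤ η whenever xᵢ = 0 and i ∉ E. Define ζ ∈ ℝⁿ by ζᵢ = -(∇f(x))ᵢ for i ∉ E and ζᵢ = -sign((∇f(x))ᵢ)·η for i ∈ E. Then ζ is a subgradient of g at x, and γ = ∇f(x) + ζ is a subgradient of F at x. Moreover, for every z ∈ ℝⁿ, F(x) - F(z) ≤ -⟨γ, z - x⟩. -/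
/-- With E = {i : |(∇f(x))ᵢ| > η}, assume |(∇f(x))ᵢ| ≤ η whenever xᵢ = 0
and i ∉ E (automatic), and (∇f(x))ᵢ = -sign(xᵢ)·η whenever xᵢ ≠ 0. Define
ζᵢ = -sign((∇f(x))ᵢ)·η for i ∈ E and ζᵢ = -(∇f(x))ᵢ otherwise. Then ζ ∈ ∂g(x),
γ = ∇f(x) + ζ ∈ ∂F(x), and F(x) - F(z) ≤ -⟨γ, z-x⟩ for all z. -/
theorem stmt8 (k n : ℕ) (A : Matrix (Fin k) (Fin n) ℝ) (b : Fin k → ℝ)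
    (η : ℝ) (hη : 0 < η) (x : Fin n → ℝ)
    (F : (Fin n → ℝ) → ℝ)
    (hF : ∀ y, F y = (1/2) * ∑ j, (A.mulVec y j - b j)^2 + η * ∑ l, |y l|)
    (gradf : Fin n → ℝ)
    (hgrad : gradf = A.transpose.mulVec (A.mulVec x - b))
    (hzero : ∀ i : Fin n, ¬ (|gradf i| > η) → x i = 0 → |gradf i| ≤ η)
    (hsupp : ∀ i : Fin n, x i ≠ 0 → gradf i = -(Real.sign (x i)) * η)
    (ζ γ : Fin n → ℝ)
    (hζ : ∀ i, ζ i = if |gradf i| > η then -(Real.sign (gradf i)) * η else -(gradf i))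
    (hγ : ∀ i, γ i = gradf i + ζ i) :
    (∀ y : Fin n → ℝ, η * ∑ i, |y i| ≥ η * ∑ i, |x i| + ∑ i, ζ i * (y i - x i)) ∧
    (∀ y : Fin n → ℝ, F y ≥ F x + ∑ i, γ i * (y i - x i)) ∧
    (∀ z : Fin n → ℝ, F x - F z ≤ -∑ i, γ i * (z i - x i)) := by
  have hζbound : ∀ i, |ζ i| ≤ η ∧ ζ i * x i = η * |x i| := by
    intro i
    by_cases hx : x i = 0
    · refine ⟨?_, by simp [hx]⟩
      rw [hζ i]
      by_cases hE : |gradf i| > η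
      · simp only [if_pos hE]
        have hne : gradf i ≠ 0 := by
          intro h; rw [h] at hE; simp at hE; linarith
        rcases hne.lt_or_gt with h | h
        · rw [Real.sign_of_neg h]; rw [abs_mul, abs_neg]; simp [abs_of_pos hη]
        · rw [Real.sign_of_pos h]; rw [abs_mul, abs_neg]; simp [abs_of_pos hη]
      · simp only [if_neg hE]
        rw [abs_neg]; exact hzero i hE hx
    · have hs := hsupp i hx
      have hE : ¬ |gradf i| > η := by
        rw [hs]
        rcases (Ne.lt_or_gt hx) with h | h
        · rw [Real.sign_of_neg h]; rw [abs_mul, abs_neg]; simp [abs_of_pos hη]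
        · rw [Real.sign_of_pos h]; rw [abs_mul, abs_neg]; simp [abs_of_pos hη]
      rw [hζ i, if_neg hE, hs]
      rcases (Ne.lt_or_gt hx) with h | h
      · rw [Real.sign_of_neg h, abs_of_neg h]
        refine ⟨?_, by ring⟩
        simp [abs_of_pos hη]
      · rw [Real.sign_of_pos h, abs_of_pos h]
        refine ⟨?_, by ring⟩
        simp [abs_of_pos hη]
  have hg : ∀ y : Fin n → ℝ,
      η * ∑ i, |y i| ≥ η * ∑ i, |x i| + ∑ i, ζ i * (y i - x i) := by
    intro y
    rw [Finset.mul_sum, Finset.mul_sum, ← Finset.sum_add_distrib]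
    apply Finset.sum_le_sum
    intro i _
    obtain ⟨h1, h2⟩ := hζbound i
    have hy : ζ i * y i ≤ η * |y i| :=
      calc ζ i * y i ≤ |ζ i * y i| := le_abs_self _
        _ = |ζ i| * |y i| := abs_mul _ _
        _ ≤ η * |y i| := mul_le_mul_of_nonneg_right h1 (abs_nonneg _)
    nlinarith
  have hf : ∀ y : Fin n → ℝ,
      (1/2 : ℝ) * ∑ j, (A.mulVec y j - b j)^2 ≥
      (1/2) * ∑ j, (A.mulVec x j - b j)^2 + ∑ i, gradf i * (y i - x i) := by
    intro y
    have key : ∀ (v : Fin n → ℝ), ∑ i, A.transpose.mulVec (A.mulVec x - b) i * v i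
        = ∑ j, (A.mulVec x j - b j) * A.mulVec v j := by
      intro v
      simp only [Matrix.mulVec, dotProduct, Matrix.transpose_apply, Pi.sub_apply,
        Finset.sum_mul, Finset.mul_sum]
      rw [Finset.sum_comm]
      exact Finset.sum_congr rfl fun j _ => Finset.sum_congr rfl fun i _ => by ring
    have hgd : ∑ i, gradf i * (y i - x i)
        = ∑ j, (A.mulVec x j - b j) * (A.mulVec y j - A.mulVec x j) := by
      subst hgrad
      simpa only [Matrix.mulVec_sub, Pi.sub_apply] using key (y - x)
    rw [hgd, ge_iff_le, Finset.mul_sum, Finset.mul_sum, ← Finset.sum_add_distrib]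
    apply Finset.sum_le_sum
    intro j _
    nlinarith [sq_nonneg (A.mulVec y j - A.mulVec x j)]
  have hFsub : ∀ y : Fin n → ℝ, F y ≥ F x + ∑ i, γ i * (y i - x i) := by
    intro y
    rw [hF y, hF x]
    have h1 := hf y
    have h2 := hg y
    have hsum : ∑ i, γ i * (y i - x i)
        = ∑ i, gradf i * (y i - x i) + ∑ i, ζ i * (y i - x i) := by
      rw [← Finset.sum_add_distrib]
      apply Finset.sum_congr rfl
      intro i _
      rw [hγ i]; ring
    linarith
  exact ⟨hg, hFsub, fun z => by have := hFsub z; linarith⟩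
end

section
/- For any convex function F : ℝⁿ → ℝ, any point x, and any unit vector n, if y minimizes F on the line L = {x + t·n : t ∈ ℝ}, then there exists a subgradient γ of F at y with ⟨γ, y - x⟩ = 0. -/
/-!
The one-sided directional derivative `p v = inf_{s > 0} (F (y + s v) - F y) / s` of a convex
`F : E → ℝ` at `y` is finite and sublinear, and every linear `g ≤ p` is a subgradient of `F` at `y`
(take `s = 1`). If `y` minimizes `F` on the line `y + ℝ u`, then `p ≥ 0` on `ℝ u`, so Hahn–Banach
extends the zero functional on `ℝ u` to a linear `g ≤ p`. Since `y - x ∈ ℝ u`, `g (y - x) = 0`.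
-/

open Set

section

variable {E : Type*} [AddCommGroup E] [Module ℝ E] {F : E → ℝ}

/-- Only meaningful when the slopes are bounded below (`ConvexOn.bddBelow_slope`);
otherwise the real `⨅` is the junk value `0`. -/
noncomputable def rightDirDeriv (F : E → ℝ) (y v : E) : ℝ :=
  ⨅ s : Ioi (0 : ℝ), (F (y + (s : ℝ) • v) - F y) / s

theorem le_rightDirDeriv {y v : E} {c : ℝ} (h : ∀ s, 0 < s → c ≤ (F (y + s • v) - F y) / s) :
    c ≤ rightDirDeriv F y v :=
  le_ciInf fun s => h s s.2

theorem rightDirDeriv_smul {y : E} {c : ℝ} (hc : 0 < c) (v : E) :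
    rightDirDeriv F y (c • v) = c * rightDirDeriv F y v := by
  have hsurj : Function.Surjective fun s : Ioi (0 : ℝ) => (⟨s * c, mul_pos s.2 hc⟩ : Ioi (0 : ℝ)) :=
    fun s => ⟨⟨s / c, div_pos s.2 hc⟩, Subtype.ext (div_mul_cancel₀ _ hc.ne')⟩
  rw [rightDirDeriv, rightDirDeriv,
    ← hsurj.iInf_comp fun s : Ioi (0 : ℝ) => (F (y + (s : ℝ) • v) - F y) / s,
    Real.mul_iInf_of_nonneg hc.le]
  refine iInf_congr fun s => ?_
  have : (s : ℝ) ≠ 0 := s.2.ne'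
  rw [smul_smul]
  field_simp

namespace ConvexOn

variable (hF : ConvexOn ℝ univ F) (y : E)
include hF

theorem comp_line (v : E) : ConvexOn ℝ univ fun t : ℝ => F (y + t • v) := by
  refine ⟨convex_univ, fun a _ b _ α β hα hβ hαβ => ?_⟩
  have hcomb : α • (y + a • v) + β • (y + b • v) = y + (α • a + β • b) • v := by
    linear_combination (norm := module) hαβ • y
  have h := hF.2 (mem_univ (y + a • v)) (mem_univ (y + b • v)) hα hβ hαβ
  rwa [hcomb] at h

theorem sub_le_slope (v : E) {s : ℝ} (hs : 0 < s) :
    F y - F (y - v) ≤ (F (y + s • v) - F y) / s := by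
  have h := (hF.comp_line y v).slope_mono_adjacent (mem_univ (-1)) (mem_univ s)
    neg_one_lt_zero hs
  simpa [sub_eq_add_neg] using h

theorem bddBelow_slope (v : E) :
    BddBelow (range fun s : Ioi (0 : ℝ) => (F (y + (s : ℝ) • v) - F y) / s) :=
  ⟨F y - F (y - v), forall_mem_range.2 fun s => hF.sub_le_slope y v s.2⟩

theorem rightDirDeriv_le_slope (v : E) {s : ℝ} (hs : 0 < s) :
    rightDirDeriv F y v ≤ (F (y + s • v) - F y) / s :=
  ciInf_le (hF.bddBelow_slope y v) ⟨s, hs⟩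

theorem rightDirDeriv_sub_le (z : E) : rightDirDeriv F y (z - y) ≤ F z - F y := by
  simpa using hF.rightDirDeriv_le_slope y (z - y) one_pos

theorem slope_add_le (v w : E) {s t : ℝ} (hs : 0 < s) (ht : 0 < t) :
    (F (y + (s * t / (s + t)) • (v + w)) - F y) / (s * t / (s + t)) ≤
      (F (y + s • v) - F y) / s + (F (y + t • w) - F y) / t := by
  have hst : 0 < s + t := add_pos hs ht
  have hsum : t / (s + t) + s / (s + t) = 1 := by field_simp; ring
  have hcomb : (t / (s + t)) • (y + s • v) + (s / (s + t)) • (y + t • w) =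
      y + (s * t / (s + t)) • (v + w) := by
    linear_combination (norm := module) hsum • y
  have h := hF.2 (mem_univ (y + s • v)) (mem_univ (y + t • w)) (by positivity) (by positivity) hsum
  rw [hcomb, smul_eq_mul, smul_eq_mul] at h
  rw [div_le_iff₀ (by positivity)]
  calc F (y + (s * t / (s + t)) • (v + w)) - F y
      ≤ t / (s + t) * (F (y + s • v) - F y) + s / (s + t) * (F (y + t • w) - F y) := by
        linear_combination h + F y * hsum
    _ = ((F (y + s • v) - F y) / s + (F (y + t • w) - F y) / t) * (s * t / (s + t)) := by
        field_simp

theorem rightDirDeriv_add_le (v w : E) :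
    rightDirDeriv F y (v + w) ≤ rightDirDeriv F y v + rightDirDeriv F y w := by
  rw [← sub_le_iff_le_add]
  refine le_rightDirDeriv fun t ht => ?_
  rw [sub_le_comm]
  refine le_rightDirDeriv fun s hs => ?_
  have := (hF.rightDirDeriv_le_slope y _ (by positivity)).trans (hF.slope_add_le y v w ht hs)
  linarith

theorem exists_linearMap_le_rightDirDeriv {u : E} (hmin : ∀ t : ℝ, F y ≤ F (y + t • u)) :
    ∃ g : E →ₗ[ℝ] ℝ, g u = 0 ∧ ∀ v, g v ≤ rightDirDeriv F y v := by
  let f : E →ₗ.[ℝ] ℝ := ⟨ℝ ∙ u, 0⟩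
  have hf : ∀ v : f.domain, f v ≤ rightDirDeriv F y v := by
    rintro ⟨v, hv⟩
    obtain ⟨c, rfl⟩ := Submodule.mem_span_singleton.1 hv
    refine le_rightDirDeriv fun s hs => div_nonneg ?_ hs.le
    rw [smul_smul, sub_nonneg]
    exact hmin _
  obtain ⟨g, hg_ext, hg_le⟩ := exists_extension_of_le_sublinear f (rightDirDeriv F y)
    (fun _ hc v => rightDirDeriv_smul hc v) (hF.rightDirDeriv_add_le y) hf
  exact ⟨g, hg_ext ⟨u, Submodule.mem_span_singleton_self u⟩, hg_le⟩

theorem exists_subgradient_apply_eq_zero {u : E} (hmin : ∀ t : ℝ, F y ≤ F (y + t • u)) :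
    ∃ g : E →ₗ[ℝ] ℝ, g u = 0 ∧ ∀ z, F y + g (z - y) ≤ F z := by
  obtain ⟨g, hgu, hg⟩ := hF.exists_linearMap_le_rightDirDeriv y hmin
  refine ⟨g, hgu, fun z => ?_⟩
  linarith [hg (z - y), hF.rightDirDeriv_sub_le y z]

end ConvexOn

end

theorem LinearMap.apply_eq_sum_single_mul {ι R : Type*} [Fintype ι] [DecidableEq ι]
    [CommSemiring R] (g : (ι → R) →ₗ[R] R) (w : ι → R) :
    g w = ∑ i, g (Pi.single i 1) * w i := by
  conv_lhs => rw [← Finset.univ_sum_single w, map_sum]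
  refine Finset.sum_congr rfl fun i _ => ?_
  rw [mul_comm, ← smul_eq_mul, ← map_smul, ← Pi.single_smul', smul_eq_mul, mul_one]

theorem stmt9_general (n : ℕ) (F : (Fin n → ℝ) → ℝ)
    (hconv : ConvexOn ℝ Set.univ F)
    (x u : Fin n → ℝ)
    (t₀ : ℝ) (y : Fin n → ℝ) (hy : y = x + t₀ • u)
    (hmin : ∀ t : ℝ, F y ≤ F (x + t • u)) :
    ∃ γ : Fin n → ℝ,
      (∀ z : Fin n → ℝ, F z ≥ F y + ∑ i, γ i * (z i - y i)) ∧
      ∑ i, γ i * (y i - x i) = 0 := by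
  have hline : ∀ t : ℝ, F y ≤ F (y + t • u) := fun t => by
    simpa only [add_smul, ← add_assoc, ← hy] using hmin (t₀ + t)
  obtain ⟨g, hgu, hg⟩ := hconv.exists_subgradient_apply_eq_zero y hline
  refine ⟨fun i => g (Pi.single i 1), fun z => ?_, ?_⟩
  · rw [ge_iff_le, show ∑ i, g (Pi.single i 1) * (z i - y i) = g (z - y) from
      (g.apply_eq_sum_single_mul (z - y)).symm]
    exact hg z
  · rw [show ∑ i, g (Pi.single i 1) * (y i - x i) = g (y - x) from
      (g.apply_eq_sum_single_mul (y - x)).symm, hy, add_sub_cancel_left, map_smul, hgu, smul_zero]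

/-- For a convex F : ℝⁿ → ℝ, a point x, a unit vector u, if y minimizes F
over the line {x + t·u : t ∈ ℝ}, then there is a subgradient γ of F at y with
⟨γ, y - x⟩ = 0. -/
theorem stmt9 (n : ℕ) (F : (Fin n → ℝ) → ℝ)
    (hconv : ConvexOn ℝ Set.univ F)
    (x u : Fin n → ℝ) (hu : ∑ i, (u i)^2 = 1)
    (t₀ : ℝ) (y : Fin n → ℝ) (hy : y = x + t₀ • u)
    (hmin : ∀ t : ℝ, F y ≤ F (x + t • u)) :
    ∃ γ : Fin n → ℝ,
      (∀ z : Fin n → ℝ, F z ≥ F y + ∑ i, γ i * (z i - y i)) ∧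
      ∑ i, γ i * (y i - x i) = 0 :=
  stmt9_general n F hconv x u t₀ y hy hmin
end

section
/- If F(x) = ½‖Ax - b‖² + η‖x‖₁ with η < ‖Aᵀb‖_∞ has a nonzero minimizer x*, then F(x*) ≥ η‖b‖/4. -/
/-!
Write `β = ‖b‖₂`. Since `‖A‖ ≤ 1`, each column of `A` has norm at most one, so
`η < ‖Aᵀb‖_∞ ≤ β`. For any `x`, the triangle inequality gives
`β ≤ ‖Ax‖₂ + ‖Ax - b‖₂ ≤ ‖x‖₁ + r` with `r = ‖Ax - b‖₂`, and then
`r²/2 + η‖x‖₁ - ηβ/4 ≥ r²/2 - ηr + 3ηβ/4 = (r - η)²/2 + η(3β/4 - η/2) ≥ 0`.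
-/

open Finset Matrix

lemma EuclideanSpace.norm_toLp_eq_sqrt_sum_sq {ι : Type*} [Fintype ι] (v : ι → ℝ) :
    ‖(WithLp.toLp 2 v : EuclideanSpace ℝ ι)‖ = √(∑ i, v i ^ 2) := by
  simp [EuclideanSpace.norm_eq]

lemma sqrt_sum_sq_le_add_sqrt_sum_sq_sub {ι : Type*} [Fintype ι] (u v : ι → ℝ) :
    √(∑ i, v i ^ 2) ≤ √(∑ i, u i ^ 2) + √(∑ i, (u i - v i) ^ 2) := by
  simpa only [← WithLp.toLp_sub, EuclideanSpace.norm_toLp_eq_sqrt_sum_sq, Pi.sub_apply] using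
    norm_le_norm_add_norm_sub (WithLp.toLp 2 u : EuclideanSpace ℝ ι) (WithLp.toLp 2 v)

lemma sqrt_sum_sq_le_sum_abs {ι : Type*} [Fintype ι] (x : ι → ℝ) :
    √(∑ i, x i ^ 2) ≤ ∑ i, |x i| := by
  refine Real.sqrt_le_iff.2 ⟨sum_nonneg fun i _ ↦ abs_nonneg _, ?_⟩
  simpa only [sq_abs] using sum_sq_le_sq_sum_of_nonneg (s := univ) fun i _ ↦ abs_nonneg (x i)

section Contraction

variable {m n : Type*} [Fintype m] [Fintype n] [DecidableEq n] {A : Matrix m n ℝ}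

lemma Matrix.sum_sq_col_le_one (hA : ∀ x : n → ℝ, ∑ j, (A *ᵥ x) j ^ 2 ≤ ∑ i, x i ^ 2)
    (i : n) : ∑ j, A j i ^ 2 ≤ 1 := by
  simpa [Matrix.mulVec_single_one, Pi.single_apply] using hA (Pi.single i 1)

lemma Matrix.abs_transpose_mulVec_le
    (hA : ∀ x : n → ℝ, ∑ j, (A *ᵥ x) j ^ 2 ≤ ∑ i, x i ^ 2) (b : m → ℝ) (i : n) :
    |(Aᵀ *ᵥ b) i| ≤ √(∑ j, b j ^ 2) := by
  rw [← Real.sqrt_sq_eq_abs]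
  refine Real.sqrt_le_sqrt ?_
  calc (Aᵀ *ᵥ b) i ^ 2 = (∑ j, A j i * b j) ^ 2 := by
        simp [Matrix.mulVec, dotProduct]
    _ ≤ (∑ j, A j i ^ 2) * ∑ j, b j ^ 2 := sum_mul_sq_le_sq_mul_sq _ _ _
    _ ≤ ∑ j, b j ^ 2 :=
        mul_le_of_le_one_left (sum_nonneg fun j _ ↦ sq_nonneg _) (A.sum_sq_col_le_one hA i)

end Contraction

lemma mul_div_four_le_sq_div_two_add_mul {η β r L : ℝ} (hη : 0 ≤ η) (hηβ : η ≤ β)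
    (hβ : β ≤ L + r) : η * β / 4 ≤ r ^ 2 / 2 + η * L := by
  nlinarith [sq_nonneg (r - η), mul_nonneg hη (sub_nonneg.2 hηβ), mul_le_mul_of_nonneg_left hβ hη]

lemma lasso_objective_ge {m n : Type*} [Fintype m] [Fintype n] {A : Matrix m n ℝ}
    (hA : ∀ x : n → ℝ, ∑ j, (A *ᵥ x) j ^ 2 ≤ ∑ i, x i ^ 2) {b : m → ℝ} {η : ℝ} (hη : 0 ≤ η)
    (hηb : η ≤ √(∑ j, b j ^ 2)) (x : n → ℝ) :
    η * √(∑ j, b j ^ 2) / 4 ≤ 1 / 2 * ∑ j, ((A *ᵥ x) j - b j) ^ 2 + η * ∑ l, |x l| := by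
  have hres : ∑ j, ((A *ᵥ x) j - b j) ^ 2 = √(∑ j, ((A *ᵥ x) j - b j) ^ 2) ^ 2 :=
    (Real.sq_sqrt (sum_nonneg fun j _ ↦ sq_nonneg _)).symm
  have hAx : √(∑ j, (A *ᵥ x) j ^ 2) ≤ ∑ l, |x l| :=
    (Real.sqrt_le_sqrt (hA x)).trans (sqrt_sum_sq_le_sum_abs x)
  rw [hres, one_div_mul_eq_div]
  exact mul_div_four_le_sq_div_two_add_mul hη hηb
    ((sqrt_sum_sq_le_add_sqrt_sum_sq_sub (A *ᵥ x) b).trans (by gcongr))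

theorem stmt10_general (k n : ℕ) (A : Matrix (Fin k) (Fin n) ℝ) (b : Fin k → ℝ)
    (η : ℝ) (hη : 0 < η)
    (hA : ∀ x : Fin n → ℝ, ∑ j, (A.mulVec x j)^2 ≤ ∑ i, (x i)^2)
    (hηlt : ∃ i : Fin n, η < |A.transpose.mulVec b i|)
    (F : (Fin n → ℝ) → ℝ)
    (hF : ∀ y, F y = (1/2) * ∑ j, (A.mulVec y j - b j)^2 + η * ∑ l, |y l|)
    (xstar : Fin n → ℝ) :
    F xstar ≥ η * Real.sqrt (∑ j, (b j)^2) / 4 := by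
  obtain ⟨i, hi⟩ := hηlt
  rw [hF]
  exact lasso_objective_ge hA hη.le (hi.le.trans (A.abs_transpose_mulVec_le hA b i)) xstar

/-- If F(x) = ½‖Ax-b‖² + η‖x‖₁ with ‖A‖ ≤ 1 and 0 < η < ‖Aᵀb‖_∞ has a
nonzero minimizer x*, then F(x*) ≥ η‖b‖/4. -/
theorem stmt10 (k n : ℕ) (A : Matrix (Fin k) (Fin n) ℝ) (b : Fin k → ℝ)
    (η : ℝ) (hη : 0 < η)
    (hA : ∀ x : Fin n → ℝ, ∑ j, (A.mulVec x j)^2 ≤ ∑ i, (x i)^2)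
    (hηlt : ∃ i : Fin n, η < |A.transpose.mulVec b i|)
    (F : (Fin n → ℝ) → ℝ)
    (hF : ∀ y, F y = (1/2) * ∑ j, (A.mulVec y j - b j)^2 + η * ∑ l, |y l|)
    (xstar : Fin n → ℝ) (hmin : ∀ y, F xstar ≤ F y) (hne : xstar ≠ 0) :
    F xstar ≥ η * Real.sqrt (∑ j, (b j)^2) / 4 :=
  stmt10_general k n A b η hη hA hηlt F hF xstar
end

section
/- Suppose real numbers d₀ ≥ d₁ ≥ … ≥ d_κ > 0 satisfy d_{r+1}/d_r ≤ 1 - ε·τ_{r+1}/(8(s+τ_{r+1})·ln τ_{r+1}) for all r, where τ_r ≤ c·s for every r in an index set I ⊆ [κ], with d₀ ≤ ½ and d_r > ε/η² for all r ≤ κ. Then Σ_{i∈I} τᵢ ≤ (8(c+1)/ε)·s·ln(cs)·ln(η²/(2ε)). -/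
/-!
Write `x_r = ε τ_r / (8 (s + τ_r) ln τ_r)`. Chaining the contractions with `1 - x ≤ e^{-x}` gives
`d_κ ≤ d_0 exp(-∑_{r ≤ κ} x_r)`, so `ε/η² < d_κ` and `d_0 ≤ 1/2` force `∑_r x_r < ln(η²/(2ε))`.
For `i ∈ I`, the bound `τ_i ≤ c s` gives `(s + τ_i) ln τ_i ≤ (c + 1) s ln(cs)`, i.e.
`τ_i ≤ (8 (c + 1) s ln(cs) / ε) x_i`; summing over `I` yields the claim.
-/

open Real Finset

noncomputable def contractionRate (ε s t : ℝ) : ℝ :=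
  ε * t / (8 * (s + t) * log t)

lemma contractionRate_nonneg {ε s t : ℝ} (hε : 0 < ε) (hs : 0 ≤ s) (ht : 1 < t) :
    0 ≤ contractionRate ε s t := by
  have := log_pos ht
  unfold contractionRate
  positivity

lemma le_mul_contractionRate {ε s c t : ℝ} (hε : 0 < ε) (hs : 0 ≤ s) (ht : 1 < t)
    (htc : t ≤ c * s) :
    t ≤ 8 * (c + 1) * s * log (c * s) / ε * contractionRate ε s t := by
  have hlog_t := log_pos ht
  have hlog_le : log t ≤ log (c * s) := log_le_log (by linarith) htc
  have hden : (s + t) * log t ≤ (c + 1) * s * log (c * s) := by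
    calc (s + t) * log t ≤ (s + t) * log (c * s) := by gcongr
      _ ≤ (c + 1) * s * log (c * s) :=
        mul_le_mul_of_nonneg_right (by linarith) (hlog_t.le.trans hlog_le)
  have hden_pos : 0 < (s + t) * log t := by positivity
  calc t = t * 1 := (mul_one t).symm
    _ ≤ t * ((c + 1) * s * log (c * s) / ((s + t) * log t)) := by
      gcongr; exact (one_le_div hden_pos).2 hden
    _ = _ := by unfold contractionRate; field_simp

lemma le_mul_exp_neg_of_div_le_one_sub {a b x : ℝ} (ha : 0 < a) (h : b / a ≤ 1 - x) :
    b ≤ a * exp (-x) :=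
  calc b = a * (b / a) := by field_simp
    _ ≤ a * (1 - x) := by gcongr
    _ ≤ a * exp (-x) := by gcongr; exact one_sub_le_exp_neg x

lemma le_mul_exp_neg_sum_Icc {d x : ℕ → ℝ} {κ : ℕ}
    (hstep : ∀ r, r + 1 ≤ κ → d (r + 1) ≤ d r * exp (-x (r + 1))) :
    ∀ r ≤ κ, d r ≤ d 0 * exp (-∑ j ∈ Icc 1 r, x j) := by
  intro r
  induction r with
  | zero => intro _; simp
  | succ n ih =>
    intro hn
    calc d (n + 1) ≤ d n * exp (-x (n + 1)) := hstep n hn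
      _ ≤ d 0 * exp (-∑ j ∈ Icc 1 n, x j) * exp (-x (n + 1)) := by
        gcongr; exact ih (by omega)
      _ = d 0 * exp (-∑ j ∈ Icc 1 (n + 1), x j) := by
        rw [sum_Icc_succ_top (by omega), neg_add, exp_add, mul_assoc]

lemma lt_log_div_of_div_lt_mul_exp_neg {a b D S : ℝ} (ha : 0 < a) (hb : 0 < b)
    (hD : D ≤ 1 / 2) (h : a / b < D * exp (-S)) : S < log (b / (2 * a)) := by
  rw [lt_log_iff_exp_lt (by positivity), lt_div_iff₀ (by positivity)]
  rw [div_lt_iff₀ hb] at h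
  have h2a : 2 * a < b * exp (-S) := by
    nlinarith [mul_le_mul_of_nonneg_right hD (mul_pos (exp_pos (-S)) hb).le]
  calc exp S * (2 * a) < exp S * (b * exp (-S)) := mul_lt_mul_of_pos_left h2a (exp_pos S)
    _ = b := by rw [mul_left_comm, ← exp_add, add_neg_cancel, exp_zero, mul_one]

theorem stmt16_general (κ : ℕ) (d : ℕ → ℝ) (τ : ℕ → ℕ)
    (ε η s c : ℝ) (hε : 0 < ε) (hη : 0 < η)
    (hs : 2 ≤ s) (hc : 1 ≤ c)
    (hτ2 : ∀ r, 2 ≤ τ r)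
    (hpos : ∀ r, r ≤ κ → 0 < d r)
    (hcontract : ∀ r, r + 1 ≤ κ →
      d (r + 1) / d r ≤ 1 - ε * (τ (r + 1) : ℝ) /
        (8 * (s + (τ (r + 1) : ℝ)) * Real.log (τ (r + 1) : ℝ)))
    (I : Finset ℕ) (hI : I ⊆ Finset.Icc 1 κ)
    (hτI : ∀ i ∈ I, (τ i : ℝ) ≤ c * s)
    (hd0 : d 0 ≤ 1 / 2)
    (hgap : ∀ r, r ≤ κ → d r > ε / η ^ 2) :
    ∑ i ∈ I, (τ i : ℝ) ≤ (8 * (c + 1) / ε) * s * Real.log (c * s)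
      * Real.log (η ^ 2 / (2 * ε)) := by
  set x : ℕ → ℝ := fun r => contractionRate ε s (τ r)
  have hτ1 : ∀ r, (1 : ℝ) < τ r := fun r => by exact_mod_cast hτ2 r
  have hdecay : d κ ≤ d 0 * exp (-∑ j ∈ Icc 1 κ, x j) :=
    le_mul_exp_neg_sum_Icc (fun r hr => le_mul_exp_neg_of_div_le_one_sub
      (hpos r (by omega)) (hcontract r hr)) κ le_rfl
  have hsum : ∑ j ∈ Icc 1 κ, x j < log (η ^ 2 / (2 * ε)) :=
    lt_log_div_of_div_lt_mul_exp_neg hε (by positivity) hd0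
      (lt_of_lt_of_le (hgap κ le_rfl) hdecay)
  set K := 8 * (c + 1) * s * log (c * s) / ε
  have hK : 0 ≤ K := by
    have := log_nonneg (show (1 : ℝ) ≤ c * s by nlinarith)
    positivity
  calc ∑ i ∈ I, (τ i : ℝ)
      ≤ ∑ i ∈ I, K * x i :=
        sum_le_sum fun i hi => le_mul_contractionRate hε (by linarith) (hτ1 i) (hτI i hi)
    _ = K * ∑ i ∈ I, x i := by rw [mul_sum]
    _ ≤ K * ∑ j ∈ Icc 1 κ, x j :=
        mul_le_mul_of_nonneg_left (sum_le_sum_of_subset_of_nonneg hI fun i _ _ =>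
          contractionRate_nonneg hε (by linarith) (hτ1 i)) hK
    _ ≤ K * log (η ^ 2 / (2 * ε)) := by gcongr
    _ = (8 * (c + 1) / ε) * s * log (c * s) * log (η ^ 2 / (2 * ε)) := by ring

/-- If d₀ ≥ d₁ ≥ … ≥ d_κ > 0 satisfy the contraction
d_{r+1}/d_r ≤ 1 - ε·τ_{r+1}/(8(s+τ_{r+1})·ln τ_{r+1}), with τᵢ ≤ c·s on an index set
I ⊆ [κ], d₀ ≤ ½, and d_r > ε/η² for all r ≤ κ, then
Σ_{i∈I} τᵢ ≤ (8(c+1)/ε)·s·ln(cs)·ln(η²/(2ε)). -/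
theorem stmt16 (κ : ℕ) (d : ℕ → ℝ) (τ : ℕ → ℕ)
    (ε η s c : ℝ) (hε : 0 < ε) (hε1 : ε < 1) (hη : 0 < η)
    (hs : 2 ≤ s) (hc : 1 ≤ c)
    (hτ2 : ∀ r, 2 ≤ τ r)
    (hmono : ∀ r, r + 1 ≤ κ → d (r + 1) ≤ d r)
    (hpos : ∀ r, r ≤ κ → 0 < d r)
    (hcontract : ∀ r, r + 1 ≤ κ →
      d (r + 1) / d r ≤ 1 - ε * (τ (r + 1) : ℝ) /
        (8 * (s + (τ (r + 1) : ℝ)) * Real.log (τ (r + 1) : ℝ)))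
    (I : Finset ℕ) (hI : I ⊆ Finset.Icc 1 κ)
    (hτI : ∀ i ∈ I, (τ i : ℝ) ≤ c * s)
    (hd0 : d 0 ≤ 1 / 2)
    (hgap : ∀ r, r ≤ κ → d r > ε / η ^ 2) :
    ∑ i ∈ I, (τ i : ℝ) ≤ (8 * (c + 1) / ε) * s * Real.log (c * s)
      * Real.log (η ^ 2 / (2 * ε)) :=
  stmt16_general κ d τ ε η s c hε hη hs hc hτ2 hpos hcontract I hI hτI hd0 hgap
end
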